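/- arXiv:2111.14565 — 3 statements merged into one kernel-verified Lean document; each statement's English description precedes it below -/
import Mathlib

section
/- Let A be a non-negative (n+1)×(m+1) matrix whose restriction to {1,…,n}×{1,…,m} has no zero row or column. If B = D₁ A D₂ and B' = D₁' A D₂' are ε-bi-stochastic matrices, where D₁, D₁', D₂, D₂' are diagonal with positive diagonal entries and last diagonal entry equal to 1, then B = B'. -/
def IsEpsBistochastic (n m : ℕ) (X : Matrix (Fin (n+1)) (Fin (m+1)) ℝ) : Prop :=
  (∀ i j, 0 ≤ X i j) ∧
  (∀ i : Fin n, ∑ j, X i.castSucc j = 1) ∧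
  (∀ j : Fin m, ∑ i, X i j.castSucc = 1) ∧
  X (Fin.last n) (Fin.last m) = 1

theorem stmt_9 (n m : ℕ) (A : Matrix (Fin (n+1)) (Fin (m+1)) ℝ)
    (hA : ∀ i j, 0 ≤ A i j)
    (hrowA : ∀ i : Fin n, ∃ j : Fin m, A i.castSucc j.castSucc ≠ 0)
    (hcolA : ∀ j : Fin m, ∃ i : Fin n, A i.castSucc j.castSucc ≠ 0)
    (x x' : Fin (n+1) → ℝ) (y y' : Fin (m+1) → ℝ)
    (hx : ∀ i, 0 < x i) (hx' : ∀ i, 0 < x' i)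
    (hy : ∀ j, 0 < y j) (hy' : ∀ j, 0 < y' j)
    (hxlast : x (Fin.last n) = 1) (hx'last : x' (Fin.last n) = 1)
    (hylast : y (Fin.last m) = 1) (hy'last : y' (Fin.last m) = 1)
    (hB : IsEpsBistochastic n m (Matrix.diagonal x * A * Matrix.diagonal y))
    (hB' : IsEpsBistochastic n m (Matrix.diagonal x' * A * Matrix.diagonal y')) :
    Matrix.diagonal x * A * Matrix.diagonal y
      = Matrix.diagonal x' * A * Matrix.diagonal y' := by
  have hent : ∀ (u : Fin (n+1) → ℝ) (v : Fin (m+1) → ℝ) (i : Fin (n+1)) (j : Fin (m+1)),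
      (Matrix.diagonal u * A * Matrix.diagonal v) i j = u i * A i j * v j := by
    intro u v i j
    rw [Matrix.mul_diagonal, Matrix.diagonal_mul]
  set P : Fin (n+1) → Fin (m+1) → ℝ := fun i j => x i * A i j * y j with hPdef
  set Q : Fin (n+1) → Fin (m+1) → ℝ := fun i j => x' i * A i j * y' j with hQdef
  obtain ⟨-, hProw, hPcol, -⟩ := hB
  obtain ⟨-, hQrow, hQcol, -⟩ := hB'
  have hProw' : ∀ i : Fin n, ∑ j, P i.castSucc j = 1 := fun i => by
    simpa [hent] using hProw i
  have hPcol' : ∀ j : Fin m, ∑ i, P i j.castSucc = 1 := fun j => by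
    simpa [hent] using hPcol j
  have hQrow' : ∀ i : Fin n, ∑ j, Q i.castSucc j = 1 := fun i => by
    simpa [hent] using hQrow i
  have hQcol' : ∀ j : Fin m, ∑ i, Q i j.castSucc = 1 := fun j => by
    simpa [hent] using hQcol j
  have hPpos : ∀ i j, A i j ≠ 0 → 0 < P i j := fun i j h =>
    mul_pos (mul_pos (hx i) ((hA i j).lt_of_ne (Ne.symm h))) (hy j)
  have hQpos : ∀ i j, A i j ≠ 0 → 0 < Q i j := fun i j h =>
    mul_pos (mul_pos (hx' i) ((hA i j).lt_of_ne (Ne.symm h))) (hy' j)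
  set a : Fin (n+1) → ℝ := fun i => Real.log (x i) - Real.log (x' i) with hadef
  set b : Fin (m+1) → ℝ := fun j => Real.log (y j) - Real.log (y' j) with hbdef
  have key : ∀ i j, (P i j - Q i j) * (Real.log (P i j) - Real.log (Q i j))
      = a i * (P i j - Q i j) + b j * (P i j - Q i j) := by
    intro i j
    by_cases h : A i j = 0
    · simp [hPdef, hQdef, h]
    · have e1 : Real.log (P i j) = Real.log (x i) + Real.log (A i j) + Real.log (y j) := by
        rw [hPdef]
        rw [Real.log_mul (mul_ne_zero (ne_of_gt (hx i)) h) (ne_of_gt (hy j)),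
          Real.log_mul (ne_of_gt (hx i)) h]
      have e2 : Real.log (Q i j) = Real.log (x' i) + Real.log (A i j) + Real.log (y' j) := by
        rw [hQdef]
        rw [Real.log_mul (mul_ne_zero (ne_of_gt (hx' i)) h) (ne_of_gt (hy' j)),
          Real.log_mul (ne_of_gt (hx' i)) h]
      rw [e1, e2, hadef, hbdef]
      ring
  have hnn : ∀ i j, 0 ≤ (P i j - Q i j) * (Real.log (P i j) - Real.log (Q i j)) := by
    intro i j
    by_cases h : A i j = 0
    · simp [hPdef, hQdef, h]
    · have hp := hPpos i j h
      have hq := hQpos i j h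
      rcases le_total (P i j) (Q i j) with hle | hle
      · have h2 : Real.log (P i j) ≤ Real.log (Q i j) := Real.log_le_log hp hle
        nlinarith
      · have h2 : Real.log (Q i j) ≤ Real.log (P i j) := Real.log_le_log hq hle
        nlinarith
  have hsum : ∑ i, ∑ j, (P i j - Q i j) * (Real.log (P i j) - Real.log (Q i j)) = 0 := by
    simp_rw [key, Finset.sum_add_distrib]
    have h1 : ∑ i, ∑ j, a i * (P i j - Q i j) = 0 := by
      refine Finset.sum_eq_zero fun i _ => ?_
      rw [← Finset.mul_sum]
      rcases Fin.eq_castSucc_or_eq_last i with ⟨k, rfl⟩ | rfl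
      · rw [Finset.sum_sub_distrib, hProw' k, hQrow' k, sub_self, mul_zero]
      · have : a (Fin.last n) = 0 := by simp [hadef, hxlast, hx'last]
        rw [this, zero_mul]
    have h2 : ∑ i, ∑ j, b j * (P i j - Q i j) = 0 := by
      rw [Finset.sum_comm]
      refine Finset.sum_eq_zero fun j _ => ?_
      rw [← Finset.mul_sum]
      rcases Fin.eq_castSucc_or_eq_last j with ⟨k, rfl⟩ | rfl
      · rw [Finset.sum_sub_distrib, hPcol' k, hQcol' k, sub_self, mul_zero]
      · have : b (Fin.last m) = 0 := by simp [hbdef, hylast, hy'last]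
        rw [this, zero_mul]
    rw [h1, h2, add_zero]
  have hzero : ∀ i j, (P i j - Q i j) * (Real.log (P i j) - Real.log (Q i j)) = 0 := by
    intro i j
    have houter := (Finset.sum_eq_zero_iff_of_nonneg
      (fun i _ => Finset.sum_nonneg fun j _ => hnn i j)).mp hsum i (Finset.mem_univ i)
    exact (Finset.sum_eq_zero_iff_of_nonneg
      (fun j _ => hnn i j)).mp houter j (Finset.mem_univ j)
  ext i j
  rw [hent, hent]
  show P i j = Q i j
  by_cases h : A i j = 0
  · simp [hPdef, hQdef, h]
  · rcases mul_eq_zero.mp (hzero i j) with h1 | h1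
    · linarith [sub_eq_zero.mp h1]
    · have := sub_eq_zero.mp h1
      calc P i j = Real.exp (Real.log (P i j)) := (Real.exp_log (hPpos i j h)).symm
        _ = Real.exp (Real.log (Q i j)) := by rw [this]
        _ = Q i j := Real.exp_log (hQpos i j h)
end

section
/- The product M = L_p C_p^T is an (n+1)×(n+1) row stochastic matrix satisfying: M_{i,j} = M_{j,i} for all i,j ∈ {1,…,n}; M_{n+1,j} = 0 for all j ∈ {1,…,n}; M_{n+1,n+1} = 1; and if a_{i,m+1} > 0 and x_{i,p} > 0 then M_{i,n+1} > 0 for all i ∈ {1,…,n}. -/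
open Matrix

theorem stmt_16 (n m : ℕ) (A : Matrix (Fin (n+1)) (Fin (m+1)) ℝ)
    (hA : ∀ i j, 0 ≤ A i j)
    (x : Fin (n+1) → ℝ) (y yprev : Fin (m+1) → ℝ)
    (hx : ∀ i, 0 < x i) (hy : ∀ j, 0 < y j) (hyprev : ∀ j, 0 < yprev j)
    (L C : Matrix (Fin (n+1)) (Fin (m+1)) ℝ)
    -- L has entries x_i a_{ij} y_{j,p-1} for i ≤ n, last row (0,…,0,1)
    (hL : ∀ (i : Fin n) (j : Fin (m+1)), L i.castSucc j = x i.castSucc * A i.castSucc j * yprev j)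
    (hLlast : ∀ j : Fin m, L (Fin.last n) j.castSucc = 0)
    (hLll : L (Fin.last n) (Fin.last m) = 1)
    -- C has entries x_i a_{ij} y_{j,p} for j ≤ m, last column (0,…,0,1)ᵀ
    (hC : ∀ (i : Fin (n+1)) (j : Fin m), C i j.castSucc = x i * A i j.castSucc * y j.castSucc)
    (hClast : ∀ i : Fin n, C i.castSucc (Fin.last m) = 0)
    (hCll : C (Fin.last n) (Fin.last m) = 1)
    -- L and Cᵀ are row stochastic
    (hLrow : ∀ i, ∑ j, L i j = 1)
    (hCtrow : ∀ j, ∑ i, C i j = 1) :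
    (∀ i j, 0 ≤ (L * Cᵀ) i j) ∧
    (∀ i, ∑ j, (L * Cᵀ) i j = 1) ∧
    (∀ i j : Fin n, (L * Cᵀ) i.castSucc j.castSucc = (L * Cᵀ) j.castSucc i.castSucc) ∧
    (∀ j : Fin n, (L * Cᵀ) (Fin.last n) j.castSucc = 0) ∧
    (L * Cᵀ) (Fin.last n) (Fin.last n) = 1 ∧
    (∀ i : Fin n, 0 < A i.castSucc (Fin.last m) → 0 < x i.castSucc →
      0 < (L * Cᵀ) i.castSucc (Fin.last n)) := by
  have hLnn : ∀ i j, 0 ≤ L i j := by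
    intro i j
    induction i using Fin.lastCases with
    | last =>
      induction j using Fin.lastCases with
      | last => rw [hLll]; norm_num
      | cast j => rw [hLlast]
    | cast i =>
      rw [hL]
      exact mul_nonneg (mul_nonneg (hx _).le (hA _ _)) (hyprev _).le
  have hCnn : ∀ i j, 0 ≤ C i j := by
    intro i j
    induction j using Fin.lastCases with
    | last =>
      induction i using Fin.lastCases with
      | last => rw [hCll]; norm_num
      | cast i => rw [hClast]
    | cast j =>
      rw [hC]
      exact mul_nonneg (mul_nonneg (hx _).le (hA _ _)) (hy _).le
  have hLlastfull : ∀ k : Fin (m+1), L (Fin.last n) k = if k = Fin.last m then 1 else 0 := by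
    intro k
    induction k using Fin.lastCases with
    | last => simp [hLll]
    | cast k => simp [hLlast, Fin.castSucc_lt_last k |>.ne]
  refine ⟨?_, ?_, ?_, ?_, ?_, ?_⟩
  · intro i j
    rw [Matrix.mul_apply]
    exact Finset.sum_nonneg fun k _ => mul_nonneg (hLnn _ _) (hCnn _ _)
  · intro i
    simp only [Matrix.mul_apply, Matrix.transpose_apply]
    rw [Finset.sum_comm]
    calc ∑ k, ∑ j, L i k * C j k = ∑ k, L i k * ∑ j, C j k := by
          simp [Finset.mul_sum]
      _ = 1 := by simp [hCtrow, hLrow]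
  · intro i j
    simp only [Matrix.mul_apply, Matrix.transpose_apply]
    rw [Fin.sum_univ_castSucc, Fin.sum_univ_castSucc, hClast, hClast]
    simp only [mul_zero, add_zero]
    refine Finset.sum_congr rfl fun k _ => ?_
    rw [hL, hL, hC, hC]
    ring
  · intro j
    simp only [Matrix.mul_apply, Matrix.transpose_apply]
    rw [Fin.sum_univ_castSucc]
    simp [hLlastfull, Fin.castSucc_lt_last, (Fin.castSucc_lt_last _).ne, hClast]
  · simp only [Matrix.mul_apply, Matrix.transpose_apply]
    rw [Fin.sum_univ_castSucc]
    simp [hLlastfull, (Fin.castSucc_lt_last _).ne, hCll]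
  · intro i hAi hxi
    simp only [Matrix.mul_apply, Matrix.transpose_apply]
    rw [Fin.sum_univ_castSucc]
    have hpos : 0 < L i.castSucc (Fin.last m) * C (Fin.last n) (Fin.last m) := by
      rw [hL, hCll, mul_one]
      exact mul_pos (mul_pos hxi hAi) (hyprev _)
    have hnn : 0 ≤ ∑ k : Fin m, L i.castSucc k.castSucc * C (Fin.last n) k.castSucc :=
      Finset.sum_nonneg fun k _ => mul_nonneg (hLnn _ _) (hCnn _ _)
    linarith
end

section
/- Let S be an (n+1)×(m+1) non-negative similarity matrix and suppose for some pair (i₀,j₀) with i₀ ≤ n and j₀ ≤ m we have s_{i₀,j₀} < s_{n+1,j₀} + s_{i₀,m+1}. Then for every ε-assignment matrix X with X_{i₀,j₀} = 1, there exists another ε-assignment matrix X' with X'_{i₀,j₀} = 0 such that Σ_{i,j} s_{ij} X'_{ij} > Σ_{i,j} s_{ij} X_{ij}. Consequently, no optimal ε-assignment (maximizing Σ s_{ij} x_{ij}) assigns i₀ to j₀. -/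
/-- An ε-assignment matrix: a {0,1}-valued (n+1)×(m+1) matrix with rows 1..n summing
to 1, columns 1..m summing to 1, and a 1 at position (n+1,m+1). -/
def IsEpsAssignmentMatrix (n m : ℕ) (X : Matrix (Fin (n+1)) (Fin (m+1)) ℝ) : Prop :=
  (∀ i j, X i j = 0 ∨ X i j = 1) ∧
  (∀ i : Fin n, ∑ j, X i.castSucc j = 1) ∧
  (∀ j : Fin m, ∑ i, X i j.castSucc = 1) ∧
  X (Fin.last n) (Fin.last m) = 1

lemma zero_of_one {k : ℕ} (f : Fin k → ℝ) (h01 : ∀ j, f j = 0 ∨ f j = 1)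
    (hsum : ∑ j, f j = 1) {a : Fin k} (ha : f a = 1) {b : Fin k} (hb : b ≠ a) :
    f b = 0 := by
  have h1 : f a + ∑ x ∈ Finset.univ.erase a, f x = ∑ x, f x :=
    Finset.add_sum_erase _ f (Finset.mem_univ a)
  have h2 : ∑ x ∈ Finset.univ.erase a, f x = 0 := by
    rw [hsum, ha] at h1; linarith
  have := (Finset.sum_eq_zero_iff_of_nonneg (by
    intro x _
    rcases h01 x with h | h <;> simp [h])).mp h2
  exact this b (by simp [hb])

lemma sum_std (n m : ℕ) (S : Matrix (Fin (n+1)) (Fin (m+1)) ℝ)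
    (a : Fin (n+1)) (b : Fin (m+1)) :
    ∑ i, ∑ j, S i j * Matrix.single a b (1:ℝ) i j = S a b := by
  simp [Matrix.single, mul_ite, ite_and, Finset.sum_ite_eq]

theorem stmt_19 (n m : ℕ) (S : Matrix (Fin (n+1)) (Fin (m+1)) ℝ)
    (hS : ∀ i j, 0 ≤ S i j)
    (i₀ : Fin n) (j₀ : Fin m)
    (h : S i₀.castSucc j₀.castSucc
      < S (Fin.last n) j₀.castSucc + S i₀.castSucc (Fin.last m)) :
    (∀ X : Matrix (Fin (n+1)) (Fin (m+1)) ℝ,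
      IsEpsAssignmentMatrix n m X → X i₀.castSucc j₀.castSucc = 1 →
      ∃ X' : Matrix (Fin (n+1)) (Fin (m+1)) ℝ,
        IsEpsAssignmentMatrix n m X' ∧ X' i₀.castSucc j₀.castSucc = 0 ∧
        ∑ i, ∑ j, S i j * X i j < ∑ i, ∑ j, S i j * X' i j) ∧
    (∀ X : Matrix (Fin (n+1)) (Fin (m+1)) ℝ,
      IsEpsAssignmentMatrix n m X →
      (∀ Y : Matrix (Fin (n+1)) (Fin (m+1)) ℝ, IsEpsAssignmentMatrix n m Y →
        ∑ i, ∑ j, S i j * Y i j ≤ ∑ i, ∑ j, S i j * X i j) →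
      X i₀.castSucc j₀.castSucc ≠ 1) := by
  have main : ∀ X : Matrix (Fin (n+1)) (Fin (m+1)) ℝ,
      IsEpsAssignmentMatrix n m X → X i₀.castSucc j₀.castSucc = 1 →
      ∃ X' : Matrix (Fin (n+1)) (Fin (m+1)) ℝ,
        IsEpsAssignmentMatrix n m X' ∧ X' i₀.castSucc j₀.castSucc = 0 ∧
        ∑ i, ∑ j, S i j * X i j < ∑ i, ∑ j, S i j * X' i j := by
    intro X ⟨h01, hrow, hcol, hcorner⟩ hone
    set i₀' := i₀.castSucc with hi0
    set j₀' := j₀.castSucc with hj0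
    have hne_i : Fin.last n ≠ i₀' := (Fin.castSucc_lt_last i₀).ne'
    have hne_j : Fin.last m ≠ j₀' := (Fin.castSucc_lt_last j₀).ne'
    have hne_i' : i₀' ≠ Fin.last n := hne_i.symm
    have hne_j' : j₀' ≠ Fin.last m := hne_j.symm
    have hz1 : X i₀' (Fin.last m) = 0 :=
      zero_of_one (fun j => X i₀' j) (fun j => h01 _ j) (hrow i₀) hone hne_j
    have hz2 : X (Fin.last n) j₀' = 0 :=
      zero_of_one (fun i => X i j₀') (fun i => h01 i _) (hcol j₀) hone hne_i
    refine ⟨fun i j =>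
      if i = i₀' ∧ j = j₀' then 0
      else if i = i₀' ∧ j = Fin.last m then 1
      else if i = Fin.last n ∧ j = j₀' then 1
      else X i j, ⟨?_, ?_, ?_, ?_⟩, by simp, ?_⟩
    · intro i j
      dsimp only
      split_ifs <;> simp [h01 i j]
    · intro i
      have hil : i.castSucc ≠ Fin.last n := (Fin.castSucc_lt_last i).ne
      by_cases hi : i.castSucc = i₀'
      · have key : ∀ j, (if i.castSucc = i₀' ∧ j = j₀' then (0:ℝ)
            else if i.castSucc = i₀' ∧ j = Fin.last m then 1
            else if i.castSucc = Fin.last n ∧ j = j₀' then 1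
            else X i.castSucc j)
            = X i.castSucc j
              + (if j = j₀' then -1 else 0) + (if j = Fin.last m then 1 else 0) := by
          intro j
          by_cases h1 : j = j₀'
          · subst h1; simp [hi, hne_j', hone]
          · by_cases h2 : j = Fin.last m
            · subst h2; simp [hi, h1, hne_j', hz1]
            · simp [hi, h1, h2, hil]
        rw [Finset.sum_congr rfl (fun j _ => key j)]
        simp [Finset.sum_add_distrib, hrow i]
      · have key : ∀ j, (if i.castSucc = i₀' ∧ j = j₀' then (0:ℝ)
            else if i.castSucc = i₀' ∧ j = Fin.last m then 1
            else if i.castSucc = Fin.last n ∧ j = j₀' then 1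
            else X i.castSucc j) = X i.castSucc j := by
          intro j; simp [hi, hil]
        rw [Finset.sum_congr rfl (fun j _ => key j)]
        exact hrow i
    · intro j
      have hjl : j.castSucc ≠ Fin.last m := (Fin.castSucc_lt_last j).ne
      by_cases hj : j.castSucc = j₀'
      · have key : ∀ i, (if i = i₀' ∧ j.castSucc = j₀' then (0:ℝ)
            else if i = i₀' ∧ j.castSucc = Fin.last m then 1
            else if i = Fin.last n ∧ j.castSucc = j₀' then 1
            else X i j.castSucc)
            = X i j.castSucc
              + (if i = i₀' then -1 else 0) + (if i = Fin.last n then 1 else 0) := by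
          intro i
          by_cases h1 : i = i₀'
          · subst h1; simp [hj, hne_i', hone]
          · by_cases h2 : i = Fin.last n
            · subst h2; simp [hj, h1, hne_i, hz2]
            · simp [hj, h1, h2, hjl]
        rw [Finset.sum_congr rfl (fun i _ => key i)]
        simp [Finset.sum_add_distrib, hcol j]
      · have key : ∀ i, (if i = i₀' ∧ j.castSucc = j₀' then (0:ℝ)
            else if i = i₀' ∧ j.castSucc = Fin.last m then 1
            else if i = Fin.last n ∧ j.castSucc = j₀' then 1
            else X i j.castSucc) = X i j.castSucc := by
          intro i; simp [hj, hjl]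
        rw [Finset.sum_congr rfl (fun i _ => key i)]
        exact hcol j
    · simp [hne_i, hne_j, hcorner]
    · have key : ∀ i j, (if i = i₀' ∧ j = j₀' then (0:ℝ)
          else if i = i₀' ∧ j = Fin.last m then 1
          else if i = Fin.last n ∧ j = j₀' then 1
          else X i j)
          = X i j - Matrix.single i₀' j₀' (1:ℝ) i j
            + Matrix.single i₀' (Fin.last m) (1:ℝ) i j
            + Matrix.single (Fin.last n) j₀' (1:ℝ) i j := by
        intro i j
        by_cases h1 : i = i₀' ∧ j = j₀'
        · obtain ⟨rfl, rfl⟩ := h1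
          simp [Matrix.single, hne_i, hne_j, hne_i', hne_j', hone]
        · by_cases h2 : i = i₀' ∧ j = Fin.last m
          · obtain ⟨rfl, rfl⟩ := h2
            simp [h1, Matrix.single, hne_i, hne_j, hne_i', hne_j', hz1]
          · by_cases h3 : i = Fin.last n ∧ j = j₀'
            · obtain ⟨rfl, rfl⟩ := h3
              simp [h1, h2, Matrix.single, hne_i, hne_j, hne_i', hne_j', hz2]
            · simp only [if_neg h1, if_neg h2, if_neg h3, Matrix.single]
              rw [not_and_or] at h1 h2 h3
              have e1 : ¬ (i₀' = i ∧ j₀' = j) := by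
                rcases h1 with h | h
                · exact fun ⟨a, _⟩ => h a.symm
                · exact fun ⟨_, b⟩ => h b.symm
              have e2 : ¬ (i₀' = i ∧ Fin.last m = j) := by
                rcases h2 with h | h
                · exact fun ⟨a, _⟩ => h a.symm
                · exact fun ⟨_, b⟩ => h b.symm
              have e3 : ¬ (Fin.last n = i ∧ j₀' = j) := by
                rcases h3 with h | h
                · exact fun ⟨a, _⟩ => h a.symm
                · exact fun ⟨_, b⟩ => h b.symm
              simp [Matrix.of_apply, e1, e2, e3]
      calc ∑ i, ∑ j, S i j * X i j
          < ∑ i, ∑ j, S i j * X i j - S i₀' j₀' + S i₀' (Fin.last m)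
            + S (Fin.last n) j₀' := by linarith
        _ = _ := by
            simp only [key]
            simp only [mul_sub, mul_add, Finset.sum_add_distrib, Finset.sum_sub_distrib]
            rw [sum_std, sum_std, sum_std]
  refine ⟨main, ?_⟩
  intro X hX hopt hone
  obtain ⟨X', hX', _, hlt⟩ := main X hX hone
  exact absurd (hopt X' hX') (not_le.mpr hlt)
end
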